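/- arXiv:math/9909047 — 5 statements merged into one kernel-verified Lean document; each statement's English description precedes it below -/
import Mathlib

section
/- Let H be a complex Hilbert space and let M be a linear subspace of B(H) such that every element of M is a complex scalar multiple of a positive operator. If M contains the identity operator I, then every element of M is a scalar multiple of I, i.e., M ⊆ ℂ·I. -/
theorem stmt_0
    {H : Type*} [NormedAddCommGroup H] [InnerProductSpace ℂ H] [CompleteSpace H]
    (M : Submodule ℂ (H →L[ℂ] H))
    (hM : ∀ A ∈ M, ∃ (c : ℂ) (P : H →L[ℂ] H), P.IsPositive ∧ A = c • P)
    (h1 : (1 : H →L[ℂ] H) ∈ M) :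
    ∀ A ∈ M, ∃ c : ℂ, A = c • (1 : H →L[ℂ] H) := by
  intro A hA
  obtain ⟨c, P, hP, rfl⟩ := hM A hA
  rcases eq_or_ne c 0 with rfl | hc
  · exact ⟨0, by simp⟩
  have hPM : P ∈ M := by
    have h := M.smul_mem c⁻¹ hA
    rwa [smul_smul, inv_mul_cancel₀ hc, one_smul] at h
  have hPreal : ∀ x : H, ((Complex.re (inner ℂ (P x) x : ℂ) : ℂ)) = (inner ℂ (P x) x : ℂ) :=
    fun x => ((P.isPositive_iff_complex).mp hP x).1
  -- key : quadratic form is constant on unit vectors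
  have key : ∀ x y : H, ‖x‖ = 1 → ‖y‖ = 1 →
      ¬ (Complex.re (inner ℂ (P x) x : ℂ) < Complex.re (inner ℂ (P y) y : ℂ)) := by
    intro x y hx hy hlt
    set a := Complex.re (inner ℂ (P x) x : ℂ) with ha
    set b := Complex.re (inner ℂ (P y) y : ℂ) with hb
    set t : ℝ := (a + b) / 2 with ht
    have hBM : P - (t : ℂ) • 1 ∈ M := M.sub_mem hPM (M.smul_mem _ h1)
    obtain ⟨c', R, hR, hB⟩ := hM _ hBM
    have hxx : (inner ℂ x x : ℂ) = 1 := by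
      rw [inner_self_eq_norm_sq_to_K, hx]; norm_num
    have hyy : (inner ℂ y y : ℂ) = 1 := by
      rw [inner_self_eq_norm_sq_to_K, hy]; norm_num
    have hRreal := fun z => ((R.isPositive_iff_complex).mp hR z).1
    have hRx : 0 ≤ Complex.re (inner ℂ (R x) x : ℂ) := ((R.isPositive_iff_complex).mp hR x).2
    have hRy : 0 ≤ Complex.re (inner ℂ (R y) y : ℂ) := ((R.isPositive_iff_complex).mp hR y).2
    have e1 := congrArg (fun B : H →L[ℂ] H => (inner ℂ (B x) x : ℂ)) hB
    have e1' := congrArg (fun B : H →L[ℂ] H => (inner ℂ (B y) y : ℂ)) hB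
    simp only [ContinuousLinearMap.sub_apply, ContinuousLinearMap.smul_apply,
      ContinuousLinearMap.one_apply, inner_sub_left, inner_smul_left, hxx, hyy,
      mul_one, Complex.conj_ofReal] at e1 e1'
    rw [← hRreal x] at e1
    rw [← hRreal y] at e1'
    have e2 : a - t = c'.re * Complex.re (inner ℂ (R x) x : ℂ) := by
      have := congrArg Complex.re e1
      simpa [Complex.sub_re, Complex.mul_re] using this
    have e2' : b - t = c'.re * Complex.re (inner ℂ (R y) y : ℂ) := by
      have := congrArg Complex.re e1'
      simpa [Complex.sub_re, Complex.mul_re] using this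
    have hat : a - t < 0 := by rw [ht]; linarith
    have hbt : 0 < b - t := by rw [ht]; linarith
    nlinarith [mul_nonneg hRx hRy, sq_nonneg c'.re, mul_nonneg hRx hRy]
  rcases subsingleton_or_nontrivial H with hs | hs
  · exact ⟨0, by ext x; exact Subsingleton.elim _ _⟩
  obtain ⟨x₀, hx₀⟩ := exists_ne (0 : H)
  have hnx₀ : ‖x₀‖ ≠ 0 := norm_ne_zero_iff.2 hx₀
  have he : ‖(‖x₀‖ : ℂ)⁻¹ • x₀‖ = 1 := by
    rw [norm_smul, norm_inv, Complex.norm_real, Real.norm_eq_abs, abs_of_nonneg (norm_nonneg _),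
      inv_mul_cancel₀ hnx₀]
  set e := (‖x₀‖ : ℂ)⁻¹ • x₀ with hedef
  set μ := Complex.re (inner ℂ (P e) e : ℂ) with hμ
  have hconst : ∀ x : H, ‖x‖ = 1 → (inner ℂ (P x) x : ℂ) = (μ : ℂ) := by
    intro x hx
    have h₁ := key x e hx he
    have h₂ := key e x he hx
    rw [← hμ] at h₁ h₂
    have : Complex.re (inner ℂ (P x) x : ℂ) = μ := le_antisymm (not_lt.1 h₂) (not_lt.1 h₁)
    rw [← hPreal x, this]
  have hall : ∀ x : H, (inner ℂ (P x) x : ℂ) = (inner ℂ (((μ : ℂ) • (1 : H →L[ℂ] H)) x) x : ℂ) := by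
    intro x
    rcases eq_or_ne x 0 with rfl | hx0
    · simp
    have hnx : ‖x‖ ≠ 0 := norm_ne_zero_iff.2 hx0
    have hu : ‖(‖x‖ : ℂ)⁻¹ • x‖ = 1 := by
      rw [norm_smul, norm_inv, Complex.norm_real, Real.norm_eq_abs, abs_of_nonneg (norm_nonneg _),
        inv_mul_cancel₀ hnx]
    have h := hconst _ hu
    rw [map_smul, inner_smul_left, inner_smul_right] at h
    rw [map_inv₀, Complex.conj_ofReal] at h
    have hnxC : ((‖x‖ : ℂ)) ≠ 0 := by exact_mod_cast Complex.ofReal_ne_zero.2 hnx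
    have hPx : (inner ℂ (P x) x : ℂ) = (μ : ℂ) * (‖x‖ : ℂ) ^ 2 := by
      field_simp at h
      rw [h]; ring
    rw [hPx]
    simp only [ContinuousLinearMap.smul_apply, ContinuousLinearMap.one_apply, inner_smul_left,
      Complex.conj_ofReal, inner_self_eq_norm_sq_to_K]
    rfl
  have hPeq : P = (μ : ℂ) • (1 : H →L[ℂ] H) := by
    have h := (ext_inner_map (↑P : H →ₗ[ℂ] H) (↑((μ : ℂ) • (1 : H →L[ℂ] H)) : H →ₗ[ℂ] H)).mp
      (fun x => hall x)
    exact ContinuousLinearMap.coe_injective h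
  exact ⟨c * μ, by rw [hPeq, smul_smul]⟩
end

section
/- Let A be a bounded normal operator on a complex Hilbert space such that for every complex number λ, the operator A + λI is a complex scalar multiple of a positive operator. Then A is a scalar multiple of the identity. -/
/-!
If `A + λ = c P` with `P` self-adjoint and `c ≠ 0`, then `A* + λ̄ = (c̄ / c) (A + λ)`. So if `A`
is not a scalar, then for every `λ` there is `μ` with `A* + λ̄ = μ A + μ λ`. As `1` and `A` are
linearly independent, comparing with `λ = 0` forces `μ` to be independent of `λ` and `λ̄ = μ λ`
for all `λ`, which fails for `λ = 1` and `λ = i` simultaneously.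
-/

open ComplexConjugate

section StarModule

variable {M : Type*} [AddCommGroup M] [StarAddMonoid M] [Module ℂ M] [StarModule ℂ M]

lemma star_eq_smul_self_of_eq_smul_isSelfAdjoint {b p : M} {c : ℂ} (hp : IsSelfAdjoint p)
    (hc : c ≠ 0) (hb : b = c • p) : star b = (conj c / c) • b := by
  rw [hb, star_smul, hp.star_eq, smul_smul, div_mul_cancel₀ _ hc, starRingEnd_apply]

lemma conj_eq_mul_of_star_add_smul_eq {e a : M} (he : IsSelfAdjoint e)
    (hind : LinearIndependent ℂ ![e, a]) {μ : ℂ → ℂ}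
    (hμ : ∀ z : ℂ, star (a + z • e) = μ z • (a + z • e)) (z : ℂ) : conj z = μ 0 * z := by
  have h0 : star a = μ 0 • a := by simpa using hμ 0
  have hz : (conj z - μ z * z) • e + (μ 0 - μ z) • a = 0 := by
    have := hμ z
    rw [star_add, star_smul, he.star_eq, h0] at this
    rw [starRingEnd_apply]
    linear_combination (norm := module) this
  obtain ⟨hconj, hμz⟩ := LinearIndependent.pair_iff.1 hind _ _ hz
  rw [sub_eq_zero] at hconj hμz
  rw [hconj, hμz]

lemma not_forall_exists_star_add_smul_eq_smul {e a : M} (he : IsSelfAdjoint e)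
    (hind : LinearIndependent ℂ ![e, a]) :
    ¬ ∀ z : ℂ, ∃ μ : ℂ, star (a + z • e) = μ • (a + z • e) := by
  intro h
  choose μ hμ using h
  have h1 := conj_eq_mul_of_star_add_smul_eq he hind hμ 1
  have hI := conj_eq_mul_of_star_add_smul_eq he hind hμ Complex.I
  rw [map_one, mul_one] at h1
  rw [Complex.conj_I, ← h1, one_mul] at hI
  exact Complex.I_ne_zero (by linear_combination -hI / 2)

end StarModule

theorem stmt_1_general
    {H : Type*} [NormedAddCommGroup H] [InnerProductSpace ℂ H] [CompleteSpace H]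
    (A : H →L[ℂ] H)
    (h : ∀ lam : ℂ, ∃ (c : ℂ) (P : H →L[ℂ] H), P.IsPositive ∧
      A + lam • (1 : H →L[ℂ] H) = c • P) :
    ∃ c : ℂ, A = c • (1 : H →L[ℂ] H) := by
  by_contra! hA
  have hone : (1 : H →L[ℂ] H) ≠ 0 := fun h1 ↦ hA 0 (by rw [← mul_one A, h1, mul_zero, zero_smul])
  have hind : LinearIndependent ℂ ![(1 : H →L[ℂ] H), A] :=
    (LinearIndependent.pair_iff' hone).2 fun c ↦ (hA c).symm
  refine not_forall_exists_star_add_smul_eq_smul (IsSelfAdjoint.one _) hind fun z ↦ ?_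
  obtain ⟨c, P, hP, hAP⟩ := h z
  have hc : c ≠ 0 := by
    rintro rfl
    rw [zero_smul] at hAP
    exact hA (-z) (by rw [neg_smul, eq_neg_of_add_eq_zero_left hAP])
  exact ⟨_, star_eq_smul_self_of_eq_smul_isSelfAdjoint hP.isSelfAdjoint hc hAP⟩

theorem stmt_1
    {H : Type*} [NormedAddCommGroup H] [InnerProductSpace ℂ H] [CompleteSpace H]
    (A : H →L[ℂ] H) (hA : IsStarNormal A)
    (h : ∀ lam : ℂ, ∃ (c : ℂ) (P : H →L[ℂ] H), P.IsPositive ∧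
      A + lam • (1 : H →L[ℂ] H) = c • P) :
    ∃ c : ℂ, A = c • (1 : H →L[ℂ] H) :=
  stmt_1_general A h
end

section
/- Let A be a bounded normal operator on a complex nontrivial Hilbert space with the property that for every complex λ, the spectrum of A + λI lies on a straight line through the origin in ℂ. Then the spectrum of A is a singleton, and hence A is a scalar multiple of the identity. -/
/-!
If σ(A) contained two points `a ≠ b`, shifting by `λ = 1 - a` puts `1` and `1 + (b - a)` on a common
line through the origin, forcing `b - a` to be real; shifting by `λ = i - a` likewise forces
`b - a ∈ iℝ`. Hence σ(A) is a singleton `{μ}`, and the continuous functional calculus of the normal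
operator `A` gives `A = id(A) = μ(A) = μ • 1`.
-/

namespace Complex

/-- The junk value `w / 0 = 0` makes this hold without assuming `w₁ ≠ 0`. -/
lemma im_div_eq_zero_of_eq_real_smul {z w₁ w₂ : ℂ} {t₁ t₂ : ℝ}
    (h₁ : w₁ = t₁ • z) (h₂ : w₂ = t₂ • z) : (w₂ / w₁).im = 0 := by
  rw [h₁, h₂, real_smul, real_smul, mul_div_mul_comm]
  by_cases hz : z = 0
  · simp [hz]
  · simp [hz, ← ofReal_div]

lemma eq_of_forall_exists_real_smul {a b : ℂ}
    (h : ∀ lam : ℂ, ∃ z : ℂ, (∃ t : ℝ, a + lam = t • z) ∧ ∃ t : ℝ, b + lam = t • z) :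
    a = b := by
  have line_through (lam : ℂ) : ((b + lam) / (a + lam)).im = 0 := by
    obtain ⟨z, ⟨t₁, h₁⟩, ⟨t₂, h₂⟩⟩ := h lam
    exact im_div_eq_zero_of_eq_real_smul h₁ h₂
  have him : (b - a).im = 0 := by
    simpa [sub_eq_add_neg] using line_through (1 - a)
  have hre : (b - a).re = 0 := by
    simpa [div_I, add_neg_eq_zero, sub_eq_zero, eq_comm] using line_through (I - a)
  exact (sub_eq_zero.mp (ext hre him)).symm

end Complex

lemma spectrum_subsingleton_of_forall_subset_real_line {A : Type*} [Ring A] [Algebra ℂ A] (a : A)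
    (h : ∀ lam : ℂ, ∃ z : ℂ, spectrum ℂ (a + lam • (1 : A)) ⊆ {w : ℂ | ∃ t : ℝ, w = t • z}) :
    (spectrum ℂ a).Subsingleton := by
  have shift_mem {w : ℂ} (hw : w ∈ spectrum ℂ a) (lam : ℂ) :
      w + lam ∈ spectrum ℂ (a + lam • (1 : A)) := by
    rw [← Algebra.algebraMap_eq_smul_one, ← spectrum.add_singleton_eq]
    exact Set.add_mem_add hw rfl
  intro x hx y hy
  refine Complex.eq_of_forall_exists_real_smul fun lam => ?_
  obtain ⟨z, hz⟩ := h lam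
  exact ⟨z, hz (shift_mem hx lam), hz (shift_mem hy lam)⟩

theorem stmt_2
    {H : Type*} [NormedAddCommGroup H] [InnerProductSpace ℂ H] [CompleteSpace H]
    [Nontrivial H]
    (A : H →L[ℂ] H) (hA : IsStarNormal A)
    (h : ∀ lam : ℂ, ∃ z : ℂ,
      spectrum ℂ (A + lam • (1 : H →L[ℂ] H)) ⊆ {w : ℂ | ∃ t : ℝ, w = t • z}) :
    ∃ mu : ℂ, spectrum ℂ A = {mu} ∧ A = mu • (1 : H →L[ℂ] H) := by
  obtain ⟨mu, hmu⟩ := spectrum.nonempty A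
  have hspec : spectrum ℂ A = {mu} :=
    (spectrum_subsingleton_of_forall_subset_real_line A h).eq_singleton_of_mem hmu
  refine ⟨mu, hspec, ?_⟩
  rw [← Algebra.algebraMap_eq_smul_one]
  exact CFC.eq_algebraMap_of_spectrum_subset_singleton A mu hspec.subset
end

section
/- Let X be a compact Hausdorff space and let φ : C(X,ℂ) → ℂ be a continuous linear functional such that φ(1) = 1 and for every f ∈ C(X,ℂ), φ(f) belongs to the range of f. Then φ is multiplicative, i.e., φ(fg) = φ(f)φ(g) for all f, g, and hence φ is evaluation at some point of X. -/
/-!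
If `f` is real-valued and `φ f = 0`, the value `φ (f + i f²) = i φ (f²)` is attained at some
point `y`; since `f y` and `φ (f²)` are real, comparing real parts gives `f y = 0`, hence
`φ (f²) = 0`. Applied to `f - φ f` this gives `φ (f²) = (φ f)²` for real-valued `f`; polarization
and the decomposition `f = ℜ f + i ℑ f` make `φ` multiplicative, and a character of `C(X, ℂ)` is
evaluation at a point.
-/

open Complex

section

variable {X : Type*} [TopologicalSpace X]

theorem IsSelfAdjoint.of_mem_range {f : C(X, ℂ)} (hf : IsSelfAdjoint f) {z : ℂ}
    (hz : z ∈ Set.range f) : IsSelfAdjoint z := by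
  obtain ⟨y, rfl⟩ := hz
  exact congrFun (congrArg DFunLike.coe hf) y

section RangeValued

variable {F : Type*} [FunLike F C(X, ℂ) ℂ] [LinearMapClass F ℂ C(X, ℂ) ℂ] {φ : F}

theorem map_mul_self_eq_zero_of_forall_mem_range (hrange : ∀ f : C(X, ℂ), φ f ∈ Set.range f)
    {f : C(X, ℂ)} (hf : IsSelfAdjoint f) (h0 : φ f = 0) : φ (f * f) = 0 := by
  have hff : IsSelfAdjoint (f * f) := hf.mul hf
  obtain ⟨s, hs⟩ := conj_eq_iff_real.mp (hff.of_mem_range (hrange (f * f))).star_eq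
  obtain ⟨y, hy⟩ := hrange (f + I • (f * f))
  obtain ⟨r, hr⟩ := conj_eq_iff_real.mp (hf.of_mem_range ⟨y, rfl⟩).star_eq
  rw [map_add, map_smul, h0, hs, ContinuousMap.add_apply, ContinuousMap.smul_apply,
    ContinuousMap.mul_apply, hr, smul_eq_mul, zero_add] at hy
  have hr0 : r = 0 := by simpa using congrArg re hy
  have hrs : r * r = s := by simpa using congrArg im hy
  rw [hs, ← hrs, hr0, mul_zero, ofReal_zero]

theorem map_mul_self_of_forall_mem_range (h1 : φ 1 = 1)
    (hrange : ∀ f : C(X, ℂ), φ f ∈ Set.range f) {f : C(X, ℂ)} (hf : IsSelfAdjoint f) :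
    φ (f * f) = φ f * φ f := by
  set c := φ f
  have hg : IsSelfAdjoint (f - c • 1) := hf.sub ((hf.of_mem_range (hrange f)).smul (.one _))
  have h0 : φ (f - c • 1) = 0 := by rw [map_sub, map_smul, h1, smul_eq_mul, mul_one, sub_self]
  have hsq := map_mul_self_eq_zero_of_forall_mem_range hrange hg h0
  have hexp : (f - c • 1) * (f - c • 1) = f * f - (2 * c) • f + (c * c) • 1 := by
    ext y; simp; ring
  rw [hexp, map_add, map_sub, map_smul, map_smul, h1] at hsq
  simp only [smul_eq_mul, mul_one] at hsq
  linear_combination hsq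

theorem map_mul_of_isSelfAdjoint_of_forall_mem_range (h1 : φ 1 = 1)
    (hrange : ∀ f : C(X, ℂ), φ f ∈ Set.range f) {f g : C(X, ℂ)} (hf : IsSelfAdjoint f)
    (hg : IsSelfAdjoint g) : φ (f * g) = φ f * φ g := by
  have hfg : IsSelfAdjoint (f + g) := hf.add hg
  have hsum := map_mul_self_of_forall_mem_range h1 hrange hfg
  have hexp : (f + g) * (f + g) = f * f + (2 : ℂ) • (f * g) + g * g := by
    ext y; simp; ring
  rw [hexp, map_add, map_add, map_smul, map_add, map_mul_self_of_forall_mem_range h1 hrange hf,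
    map_mul_self_of_forall_mem_range h1 hrange hg, smul_eq_mul] at hsum
  linear_combination hsum / 2

theorem map_mul_of_forall_mem_range (h1 : φ 1 = 1) (hrange : ∀ f : C(X, ℂ), φ f ∈ Set.range f)
    (f g : C(X, ℂ)) : φ (f * g) = φ f * φ g := by
  have hmul {a b : selfAdjoint C(X, ℂ)} : φ (a * b) = φ a * φ b :=
    map_mul_of_isSelfAdjoint_of_forall_mem_range h1 hrange a.2 b.2
  rw [← realPart_add_I_smul_imaginaryPart f, ← realPart_add_I_smul_imaginaryPart g]
  simp only [add_mul, mul_add, smul_mul_assoc, mul_smul_comm, map_add, map_smul, smul_eq_mul,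
    hmul]
  ring

end RangeValued

theorem ContinuousMap.exists_eq_eval_of_map_mul {𝕜 : Type*} [RCLike 𝕜] [CompactSpace X]
    [T2Space X] (φ : C(X, 𝕜) →L[𝕜] 𝕜) (h1 : φ 1 = 1) (hmul : ∀ f g, φ (f * g) = φ f * φ g) :
    ∃ x : X, ∀ f, φ f = f x := by
  have hφ : (φ : WeakDual 𝕜 C(X, 𝕜)) ∈ WeakDual.characterSpace 𝕜 C(X, 𝕜) := by
    rw [WeakDual.CharacterSpace.eq_set_map_one_map_mul]
    exact ⟨h1, hmul⟩
  obtain ⟨x, hx⟩ := (WeakDual.CharacterSpace.continuousMapEval_bijective X 𝕜).2 ⟨_, hφ⟩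
  exact ⟨x, fun f => (congrArg (fun χ : WeakDual.characterSpace 𝕜 C(X, 𝕜) => χ f) hx).symm⟩

end

theorem stmt_4
    {X : Type*} [TopologicalSpace X] [CompactSpace X] [T2Space X]
    (phi : C(X, ℂ) →L[ℂ] ℂ)
    (h1 : phi 1 = 1)
    (hrange : ∀ f : C(X, ℂ), phi f ∈ Set.range f) :
    (∀ f g : C(X, ℂ), phi (f * g) = phi f * phi g) ∧
      ∃ x : X, ∀ f : C(X, ℂ), phi f = f x :=
  have hmul := map_mul_of_forall_mem_range h1 hrange
  ⟨hmul, ContinuousMap.exists_eq_eval_of_map_mul phi h1 hmul⟩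
end

section
/- Every Jordan *-isomorphism between unital C*-algebras is an isometry. -/
/-!
A surjective Jordan homomorphism `φ` is unital (take `y = 1` in `φ 1 * y + y * φ 1 = 2 y`) and
preserves triple products `a b a`, so `φ u * φ (u⁻¹ * u⁻¹) * φ u = 1` makes `φ u` invertible
whenever `u` is. Hence `spectrum (φ a) ⊆ spectrum a`, and `φ` is contractive on self-adjoint
elements, whose norm is their spectral radius; real and imaginary parts give `‖φ a‖ ≤ 2 ‖a‖`.
This bound improves itself: `‖x x⋆ x‖ = ‖x‖ ^ 3` and `φ (a a⋆ a) = φ a (φ a)⋆ φ a` give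
`‖φ a‖ ^ 3 ^ n ≤ 2 ‖a‖ ^ 3 ^ n` for all `n`, so `‖φ a‖ ≤ ‖a‖`. The inverse of `φ` is again a
Jordan ⋆-map, which gives the reverse inequality.
-/

open Filter Topology
open scoped ComplexStarModule

section JordanHom

variable {𝕜 A B : Type*} [Field 𝕜] [Ring A] [Ring B] [Algebra 𝕜 A] [Algebra 𝕜 B]
  {φ : A →ₗ[𝕜] B}

theorem map_mul_add_mul_of_map_mul_self (hφ : ∀ a, φ (a * a) = φ a * φ a) (a b : A) :
    φ (a * b + b * a) = φ a * φ b + φ b * φ a := by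
  have h : a * b + b * a = (a + b) * (a + b) - a * a - b * b := by noncomm_ring
  rw [h, map_sub, map_sub, hφ, hφ, hφ, map_add]
  noncomm_ring

theorem map_mul_mul_of_map_mul_self [CharZero 𝕜] (hφ : ∀ a, φ (a * a) = φ a * φ a) (a b : A) :
    φ (a * b * a) = φ a * φ b * φ a := by
  have h : (2 : 𝕜) • (a * b * a) = (a * b + b * a) * a + a * (a * b + b * a)
      - (a * a * b + b * (a * a)) := by
    rw [two_smul]; noncomm_ring
  apply smul_right_injective B (two_ne_zero (α := 𝕜))
  simp only [← map_smul, h, map_sub, map_mul_add_mul_of_map_mul_self hφ, hφ]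
  rw [two_smul]
  noncomm_ring

theorem map_one_of_map_mul_self [CharZero 𝕜] (hφ : ∀ a, φ (a * a) = φ a * φ a)
    (hsurj : Function.Surjective φ) : φ 1 = 1 := by
  obtain ⟨x, hx⟩ := hsurj 1
  have h := map_mul_add_mul_of_map_mul_self hφ 1 x
  rw [one_mul, mul_one, hx, mul_one, one_mul, map_add, hx, ← two_smul 𝕜, ← two_smul 𝕜] at h
  exact (smul_right_injective B (two_ne_zero (α := 𝕜)) h).symm

theorem IsUnit.map_of_map_mul_self [CharZero 𝕜] (hφ : ∀ a, φ (a * a) = φ a * φ a)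
    (hsurj : Function.Surjective φ) {u : A} (hu : IsUnit u) : IsUnit (φ u) := by
  obtain ⟨u, rfl⟩ := hu
  have h : φ u * φ (↑u⁻¹ * ↑u⁻¹) * φ u = 1 := by
    rw [← map_mul_mul_of_map_mul_self hφ, ← map_one_of_map_mul_self hφ hsurj]
    congr 1
    simp
  exact isUnit_iff_exists_and_exists.mpr
    ⟨⟨_, by rwa [← mul_assoc]⟩, ⟨_, h⟩⟩

theorem spectrum_map_subset_of_map_mul_self [CharZero 𝕜] (hφ : ∀ a, φ (a * a) = φ a * φ a)
    (hsurj : Function.Surjective φ) (a : A) : spectrum 𝕜 (φ a) ⊆ spectrum 𝕜 a := by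
  intro z hz hunit
  apply hz
  show IsUnit _
  have h : φ (algebraMap 𝕜 A z - a) = algebraMap 𝕜 B z - φ a := by
    rw [map_sub, Algebra.algebraMap_eq_smul_one, Algebra.algebraMap_eq_smul_one, map_smul,
      map_one_of_map_mul_self hφ hsurj]
  exact h ▸ hunit.map_of_map_mul_self hφ hsurj

end JordanHom

theorem CStarRing.norm_mul_star_mul_self {E : Type*} [NonUnitalNormedRing E] [StarRing E]
    [CStarRing E] (x : E) : ‖x * star x * x‖ = ‖x‖ ^ 3 := by
  rcases eq_or_ne x 0 with rfl | hx
  · simp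
  refine le_antisymm ?_ (le_of_mul_le_mul_left ?_ (norm_pos_iff.mpr hx))
  · calc ‖x * star x * x‖ ≤ ‖x‖ * ‖star x‖ * ‖x‖ := norm_mul₃_le
      _ = ‖x‖ ^ 3 := by rw [norm_star]; ring
  · calc ‖x‖ * ‖x‖ ^ 3 = ‖star (star x * x) * (star x * x)‖ := by
          rw [CStarRing.norm_star_mul_self, CStarRing.norm_star_mul_self]; ring
      _ = ‖star x * (x * star x * x)‖ := by simp only [star_mul, star_star, mul_assoc]
      _ ≤ ‖x‖ * ‖x * star x * x‖ := by rw [← norm_star x]; exact norm_mul_le _ _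

theorem le_of_forall_pow_le_mul_pow {x y C : ℝ} (hy : 0 ≤ y) {k : ℕ → ℕ}
    (hk : Tendsto k atTop atTop) (h : ∀ n, x ^ k n ≤ C * y ^ k n) : x ≤ y := by
  by_contra! hxy
  have hx : 0 < x := hy.trans_lt hxy
  have hlim : Tendsto (fun n => C * (y / x) ^ k n) atTop (𝓝 0) := by
    simpa using ((tendsto_pow_atTop_nhds_zero_of_lt_one (div_nonneg hy hx.le)
      ((div_lt_one hx).mpr hxy)).comp hk).const_mul C
  refine zero_lt_one.not_ge (ge_of_tendsto' hlim fun n => ?_)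
  rw [div_pow, ← mul_div_assoc, le_div_iff₀ (pow_pos hx _), one_mul]
  exact h n

section CStarAlgebra

variable {A B : Type*} [CStarAlgebra A] [CStarAlgebra B] {φ : A →ₗ[ℂ] B}

theorem norm_map_le_of_isSelfAdjoint (hφ : ∀ a, φ (a * a) = φ a * φ a)
    (hstar : ∀ a, φ (star a) = star (φ a)) (hsurj : Function.Surjective φ)
    {h : A} (hh : IsSelfAdjoint h) : ‖φ h‖ ≤ ‖h‖ := by
  have hφh : IsSelfAdjoint (φ h) := by rw [IsSelfAdjoint, ← hstar, hh.star_eq]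
  have hrad : spectralRadius ℂ (φ h) ≤ spectralRadius ℂ h :=
    iSup_le_iSup_of_subset (spectrum_map_subset_of_map_mul_self hφ hsurj h)
  rwa [hφh.spectralRadius_eq_nnnorm, hh.spectralRadius_eq_nnnorm, ENNReal.coe_le_coe] at hrad

theorem norm_map_le_two_mul (hφ : ∀ a, φ (a * a) = φ a * φ a)
    (hstar : ∀ a, φ (star a) = star (φ a)) (hsurj : Function.Surjective φ)
    (a : A) : ‖φ a‖ ≤ 2 * ‖a‖ := by
  have hre := norm_map_le_of_isSelfAdjoint hφ hstar hsurj (ℜ a).prop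
  have him := norm_map_le_of_isSelfAdjoint hφ hstar hsurj (ℑ a).prop
  calc ‖φ a‖ = ‖φ (ℜ a) + Complex.I • φ (ℑ a)‖ := by
        rw [← map_smul, ← map_add, realPart_add_I_smul_imaginaryPart]
    _ ≤ ‖φ (ℜ a)‖ + ‖φ (ℑ a)‖ := by
        refine (norm_add_le _ _).trans_eq ?_
        rw [norm_smul, Complex.norm_I, one_mul]
    _ ≤ ‖a‖ + ‖a‖ := add_le_add (hre.trans (realPart.norm_le a))
        (him.trans (imaginaryPart.norm_le a))
    _ = 2 * ‖a‖ := by ring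

theorem norm_map_pow_three_pow_le (hφ : ∀ a, φ (a * a) = φ a * φ a)
    (hstar : ∀ a, φ (star a) = star (φ a)) (hsurj : Function.Surjective φ)
    (n : ℕ) (a : A) : ‖φ a‖ ^ 3 ^ n ≤ 2 * ‖a‖ ^ 3 ^ n := by
  induction n generalizing a with
  | zero => simpa using norm_map_le_two_mul hφ hstar hsurj a
  | succ n ih =>
    have hcube : ‖φ a‖ ^ 3 = ‖φ (a * star a * a)‖ := by
      rw [map_mul_mul_of_map_mul_self hφ, hstar, CStarRing.norm_mul_star_mul_self]
    rw [pow_succ', pow_mul, pow_mul, hcube, ← CStarRing.norm_mul_star_mul_self]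
    exact ih _

theorem norm_map_le (hφ : ∀ a, φ (a * a) = φ a * φ a)
    (hstar : ∀ a, φ (star a) = star (φ a)) (hsurj : Function.Surjective φ)
    (a : A) : ‖φ a‖ ≤ ‖a‖ :=
  le_of_forall_pow_le_mul_pow (norm_nonneg a)
    (tendsto_pow_atTop_atTop_of_one_lt (by norm_num))
    (norm_map_pow_three_pow_le hφ hstar hsurj · a)

end CStarAlgebra

theorem stmt_13
    {A B : Type*} [CStarAlgebra A] [CStarAlgebra B]
    (phi : A →ₗ[ℂ] B) (hbij : Function.Bijective phi)
    (hsq : ∀ a : A, phi (a * a) = phi a * phi a)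
    (hstar : ∀ a : A, phi (star a) = star (phi a)) :
    ∀ a : A, ‖phi a‖ = ‖a‖ := by
  intro a
  let e : A ≃ₗ[ℂ] B := LinearEquiv.ofBijective phi hbij
  have hright : ∀ b, phi (e.symm b) = b := e.apply_symm_apply
  have hleft : ∀ x, e.symm (phi x) = x := e.symm_apply_apply
  have hsq' : ∀ b, e.symm (b * b) = e.symm b * e.symm b := fun b => by
    conv_lhs => rw [← hright b, ← hsq, hleft]
  have hstar' : ∀ b, e.symm (star b) = star (e.symm b) := fun b => by
    conv_lhs => rw [← hright b, ← hstar, hleft]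
  refine le_antisymm (norm_map_le hsq hstar hbij.2 a) ?_
  have h := norm_map_le hsq' hstar' e.symm.surjective (phi a)
  rwa [LinearEquiv.coe_coe, hleft] at h
end
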